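/- Let A be a C*-algebra, n ≥ 1, and J_1, …, J_n closed two-sided ideals of A with ⋂_i J_i = {0}; write q_i : A → A/J_i for the quotient map and K_{ij} = J_i + J_j. For each i let E_i be a right Hilbert C*-module over the C*-algebra A/J_i (so E_i is an A-module via q_i), and write E_i|_{ij} for the quotient normed module E_i / closure(E_i·q_i(K_{ij})). Suppose given, for each ordered pair (i,j), a surjective A-linear isometry ζ_{ij} : E_j|_{ij} → E_i|_{ij} which is unitary in the following sense: whenever z, z′ ∈ E_j and w, w′ ∈ E_i are such that the class of w in E_i|_{ij} equals ζ_{ij}(class of z) and the class of w′ equals ζ_{ij}(class of z′), then the images of ⟨w|w′⟩ ∈ A/J_i and of ⟨z|z′⟩ ∈ A/J_j in A/K_{ij} coincide. Let G := {(z_i)_i ∈ Π_i E_i : for all (i,j), the class of z_i in E_i|_{ij} equals ζ_{ij}(class of z_j in E_j|_{ij})}. Then: (a) G is a closed A-submodule of Π_i E_i (with the componentwise A-module structure via the q_i); (b) for all z = (z_i), z′ = (z′_i) ∈ G there is a unique element ⟨z|z′⟩_A ∈ A satisfying ⟨z|z′⟩_A + J_i = ⟨z_i|z′_i⟩ in A/J_i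 for every i; and (c) with this A-valued inner product, G is a right Hilbert C*-module over A whose norm coincides with the supremum norm ‖(z_i)_i‖ = max_i ‖z_i‖. -/

import Mathlib

/-!
STATEMENT 5 (gluing Hilbert modules: the glued module is a Hilbert module).

`A` a C*-algebra, `J 1, …, J n` closed two-sided ideals with trivial
intersection.  The quotient C*-algebras `A/J i` are presented as C*-algebras
`B i` together with surjective *-homomorphisms `q i : A → B i` with kernel
`J i` (such a presentation determines `B i` up to isometric *-isomorphism with
`A/J i`).  `E i` is a right Hilbert C*-module over `B i` (hence an `A`-module
via `q i`), and `E i |_{ij}` is the quotient of `E i` by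
`closure (span {e <• (q i c) : c ∈ J i ⊔ J j})`; a map between such quotients
is encoded by its graph on representatives: `ζ i j z w` means
"`ζ_{ij}(class of z) = class of w` in `E i |_{ij}`".  `IsGluingDatum` below
records that each `ζ i j` is (the graph of) a well-defined surjective
`A`-linear isometry `E j |_{ij} → E i |_{ij}` which is unitary (compatible
with the `B i`- and `B j`-valued inner products after mapping to `A/(J i ⊔ J j)`).

Conclusion, for the glued set
`G = {(z i)_i : ∀ i j, class (z i) = ζ_{ij} (class (z j))}` inside `Π i, E i`
(carrying the supremum norm):
(a) `G` is a closed `A`-submodule of `Π i, E i`;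
(b) for `z, z' ∈ G` there is a unique `a ∈ A` with `q i a = ⟪z i, z' i⟫` for all `i`;
(c) this pairing makes `G` a right Hilbert C*-module over `A`: it is hermitian,
additive, `A`-linear, positive (`= star b * b`), definite, and its induced norm
`√‖⟪z,z⟫_A‖` coincides with the supremum norm, i.e. `‖⟪z,z⟫_A‖ = ‖z‖ ^ 2`
(completeness holds since `G` is closed in the complete space `Π i, E i`).
-/

open Metric Filter Topology
open scoped RightActions

/-- The December-2024 Mathlib `CStarModule` (right module, `SMul Aᵐᵒᵖ E`), restated verbatim:
current Mathlib's `CStarModule` is now a left-module notion with another axiom. -/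
class RightCStarModule (A E : Type*) [NonUnitalSemiring A] [StarRing A] [Module ℂ A]
    [AddCommGroup E] [Module ℂ E] [PartialOrder A] [SMul Aᵐᵒᵖ E] [Norm A] [Norm E]
    extends Inner A E where
  inner_add_right {x} {y} {z} : inner x (y + z) = inner x y + inner x z
  inner_self_nonneg {x} : 0 ≤ inner x x
  inner_self {x} : inner x x = 0 ↔ x = 0
  inner_op_smul_right {a : A} {x y : E} : inner x (y <• a) = inner x y * a
  inner_smul_right_complex {z : ℂ} {x} {y} : inner x (z • y) = z • inner x y
  star_inner x y : star (inner x y) = inner y x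
  norm_eq_sqrt_norm_inner_self x : ‖x‖ = √‖inner x x‖

/-- `E·q(S)`: the closed `ℂ`-linear span of `{e <• q c : c ∈ S, e ∈ E}` in `E`. -/
noncomputable def resIdealSpan {A B : Type*} [NonUnitalCStarAlgebra A] [NonUnitalCStarAlgebra B]
    (E : Type*) [NormedAddCommGroup E] [Module ℂ E] [SMul Bᵐᵒᵖ E]
    (q : A →⋆ₙₐ[ℂ] B) (S : Set A) : Set E :=
  closure (Submodule.span ℂ {z : E | ∃ c ∈ S, ∃ e : E, z = e <• q c} : Set E)

/-- A gluing datum for Hilbert modules over the ideals `J i`: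
each `ζ i j` is the graph of a surjective `A`-linear unitary isometry
`E j |_{ij} → E i |_{ij}`. -/
structure IsGluingDatum {A : Type*} [NonUnitalCStarAlgebra A] {n : ℕ}
    (J : Fin n → TwoSidedIdeal A)
    {B : Fin n → Type*} [∀ i, NonUnitalCStarAlgebra (B i)]
    [∀ i, PartialOrder (B i)] [∀ i, StarOrderedRing (B i)]
    (q : ∀ i, A →⋆ₙₐ[ℂ] B i)
    {E : Fin n → Type*} [∀ i, NormedAddCommGroup (E i)] [∀ i, Module ℂ (E i)]
    [∀ i, SMul (B i)ᵐᵒᵖ (E i)] [∀ i, RightCStarModule (B i) (E i)]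
    (ζ : ∀ i j, E j → E i → Prop) : Prop where
  /-- every class has an image (totality of the graph) -/
  total : ∀ i j (z : E j), ∃ w : E i, ζ i j z w
  /-- the graph only depends on the classes mod `E·q(J i ⊔ J j)` -/
  resp : ∀ i j (z z' : E j) (w w' : E i), ζ i j z w →
    z' - z ∈ resIdealSpan (E j) (q j) ((J i ⊔ J j : TwoSidedIdeal A) : Set A) →
    w' - w ∈ resIdealSpan (E i) (q i) ((J i ⊔ J j : TwoSidedIdeal A) : Set A) →
    ζ i j z' w'
  /-- the image class is well defined (functionality of the graph) -/
  func : ∀ i j (z : E j) (w w' : E i), ζ i j z w → ζ i j z w' →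
    w - w' ∈ resIdealSpan (E i) (q i) ((J i ⊔ J j : TwoSidedIdeal A) : Set A)
  /-- additivity -/
  add : ∀ i j (z z' : E j) (w w' : E i), ζ i j z w → ζ i j z' w' → ζ i j (z + z') (w + w')
  /-- `A`-linearity -/
  smulA : ∀ i j (a : A) (z : E j) (w : E i), ζ i j z w → ζ i j (z <• q j a) (w <• q i a)
  /-- isometry for the quotient norms -/
  isometry : ∀ i j (z : E j) (w : E i), ζ i j z w →
    infDist w (resIdealSpan (E i) (q i) ((J i ⊔ J j : TwoSidedIdeal A) : Set A)) =
      infDist z (resIdealSpan (E j) (q j) ((J i ⊔ J j : TwoSidedIdeal A) : Set A))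
  /-- surjectivity -/
  surj : ∀ i j (w : E i), ∃ z : E j, ζ i j z w
  /-- unitarity: `ζ i j` intertwines the inner products modulo `J i ⊔ J j`. -/
  unitary : ∀ i j (z z' : E j) (w w' : E i), ζ i j z w → ζ i j z' w' →
    ∀ a a' : A, q i a = (inner (B i) w w' : B i) → q j a' = (inner (B j) z z' : B j) →
      a - a' ∈ J i ⊔ J j


/-!
The glued set `G` is closed under addition and the `A`-action by the axioms of the gluing datum,
and topologically closed because each `ζ i j` is isometric, so that its graph is closed. Hence it
is also closed under complex scalars: `c • z` is the limit of `z <• q (c • u)` along an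
approximate unit `u` of `A`.

The `A`-valued inner product is a Chinese remainder problem. By unitarity the local products
`⟪z i, z' i⟫` lift to elements of `A` that agree modulo `J i ⊔ J j`. Such a compatible family is
solved up to `ε` one index at a time, using local units `f (star y * y)` from the functional
calculus to kill one ideal after another. Since `a ↦ (q i a)_i` is an injective, hence
isometric, ⋆-homomorphism, its range is closed and the approximate solutions give an exact one.
Injectivity then carries every Hilbert-module axiom over from the `E i` to `G`, and isometry
gives `‖⟪z, z⟫_A‖ = maxᵢ ‖z i‖²`.
-/

open scoped CStarAlgebra

namespace RightCStarModule

section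

variable {A E : Type*} [NonUnitalCStarAlgebra A] [PartialOrder A] [NormedAddCommGroup E]
  [Module ℂ E] [SMul Aᵐᵒᵖ E] [RightCStarModule A E]

lemma inner_op_smul_left {a : A} {x y : E} : inner A (x <• a) y = star a * inner A x y := by
  rw [← star_inner y, inner_op_smul_right, star_mul, star_inner]

lemma inner_smul_left_complex {c : ℂ} {x y : E} : inner A (c • x) y = star c • inner A x y := by
  rw [← star_inner y, inner_smul_right_complex, star_smul, star_inner]

lemma inner_sub_right {x y z : E} : inner A x (y - z) = inner A x y - inner A x z :=
  eq_sub_of_add_eq (by rw [← inner_add_right, sub_add_cancel])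

lemma inner_sub_left {x y z : E} : inner A (x - y) z = inner A x z - inner A y z := by
  rw [← star_inner z, inner_sub_right, star_sub, star_inner, star_inner]

lemma norm_sq_eq_norm_inner_self (x : E) : ‖x‖ ^ 2 = ‖inner A x x‖ := by
  rw [norm_eq_sqrt_norm_inner_self (A := A) x, Real.sq_sqrt (norm_nonneg _)]

lemma smul_op_smul_comm (c : ℂ) (e : E) (b : A) : c • (e <• b) = e <• (c • b) := by
  have h : ∀ x : E, inner A x (c • (e <• b) - e <• (c • b)) = 0 := fun x ↦ by
    rw [inner_sub_right, inner_smul_right_complex, inner_op_smul_right, inner_op_smul_right,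
      mul_smul_comm, sub_self]
  exact sub_eq_zero.1 (inner_self.1 (h _))

lemma norm_sub_op_smul_sq_le (e : E) {u : A} (hu : IsSelfAdjoint u) (hu₁ : ‖u‖ ≤ 1) :
    ‖e - e <• u‖ ^ 2 ≤ 2 * ‖inner A e e - inner A e e * u‖ := by
  set p := inner A e e
  have hinner : inner A (e - e <• u) (e - e <• u) = (p - p * u) - u * (p - p * u) := by
    simp only [inner_sub_left, inner_sub_right, inner_op_smul_left, inner_op_smul_right,
      hu.star_eq, p]
    noncomm_ring
  calc ‖e - e <• u‖ ^ 2 = ‖(p - p * u) - u * (p - p * u)‖ := by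
        rw [norm_sq_eq_norm_inner_self (A := A), hinner]
    _ ≤ ‖p - p * u‖ + ‖u‖ * ‖p - p * u‖ :=
        (norm_sub_le _ _).trans (by gcongr; exact norm_mul_le _ _)
    _ ≤ 2 * ‖p - p * u‖ := by nlinarith [norm_nonneg (p - p * u)]

lemma tendsto_op_smul_map {C : Type*} [NonUnitalCStarAlgebra C] (q : C →⋆ₙₐ[ℂ] A)
    (hq : Function.Surjective q) {l : Filter C} (hl : l.IsApproximateUnit)
    (hl_sa : ∀ᶠ u in l, IsSelfAdjoint u) (hl_norm : ∀ᶠ u in l, ‖u‖ ≤ 1) (e : E) :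
    Tendsto (fun u ↦ e <• q u) l (𝓝 e) := by
  obtain ⟨x, hx⟩ := hq (inner A e e)
  have hx_lim : Tendsto (fun u ↦ √(2 * ‖x - x * u‖)) l (𝓝 0) := by
    have h := (tendsto_iff_norm_sub_tendsto_zero.1 (hl.tendsto_mul_left x)).const_mul 2
    rw [mul_zero] at h
    simpa only [Function.comp_def, Real.sqrt_zero, norm_sub_rev (x * _)] using
      (Real.continuous_sqrt.tendsto 0).comp h
  rw [tendsto_iff_norm_sub_tendsto_zero]
  refine squeeze_zero' (.of_forall fun _ ↦ norm_nonneg _) ?_ hx_lim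
  filter_upwards [hl_sa, hl_norm] with u hu hu₁
  rw [norm_sub_rev]
  refine Real.le_sqrt_of_sq_le ((norm_sub_op_smul_sq_le e (hu.map q)
    ((NonUnitalStarAlgHom.norm_apply_le q u).trans hu₁)).trans ?_)
  rw [← hx, ← map_mul, ← map_sub]
  gcongr
  exact NonUnitalStarAlgHom.norm_apply_le q _

end

protected lemma norm_smul (A : Type*) {E : Type*} [NonUnitalCStarAlgebra A] [PartialOrder A]
    [NormedAddCommGroup E] [Module ℂ E] [SMul Aᵐᵒᵖ E] [RightCStarModule A E] (c : ℂ) (x : E) :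
    ‖c • x‖ = ‖c‖ * ‖x‖ := by
  rw [norm_eq_sqrt_norm_inner_self (A := A), norm_eq_sqrt_norm_inner_self (A := A) x,
    inner_smul_left_complex, inner_smul_right_complex, smul_smul, norm_smul, norm_mul, norm_star,
    Real.sqrt_mul (mul_self_nonneg _), Real.sqrt_mul_self (norm_nonneg c)]

lemma continuous_const_smul (A : Type*) {E : Type*} [NonUnitalCStarAlgebra A] [PartialOrder A]
    [NormedAddCommGroup E] [Module ℂ E] [SMul Aᵐᵒᵖ E] [RightCStarModule A E] (c : ℂ) :
    Continuous fun x : E ↦ c • x :=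
  AddMonoidHomClass.continuous_of_bound (DistribSMul.toAddMonoidHom E c) ‖c‖
    fun x ↦ (RightCStarModule.norm_smul A c x).le

end RightCStarModule

lemma abs_mul_div_max_sq_le {r : ℝ} (hr : 0 < r) (t : ℝ) : |t * (r / max |t| r) ^ 2| ≤ r := by
  have hM : 0 < max |t| r := lt_max_of_lt_right hr
  rw [abs_mul, abs_pow, abs_div, abs_of_pos hr, abs_of_pos hM]
  calc |t| * (r / max |t| r) ^ 2 ≤ max |t| r * (r / max |t| r) ^ 2 := by
        gcongr; exact le_max_left _ _
    _ = r * (r / max |t| r) := by field_simp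
    _ ≤ r * 1 := by gcongr; exact div_le_one_of_le₀ (le_max_right _ _) hM.le
    _ = r := mul_one r

lemma abs_mul_one_sub_min_sq_le {δ : ℝ} (hδ : 0 < δ) (t : ℝ) :
    |t * (1 - min (|t| / δ) 1) ^ 2| ≤ δ := by
  rcases le_or_gt |t| δ with ht | ht
  · have h₀ : 0 ≤ |t| / δ := by positivity
    have h₁ : |t| / δ ≤ 1 := div_le_one_of_le₀ ht hδ.le
    rw [min_eq_left h₁, abs_mul, abs_pow]
    calc |t| * |1 - |t| / δ| ^ 2 ≤ |t| * 1 := by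
          gcongr; rw [sq_abs]; nlinarith
      _ ≤ δ := by rwa [mul_one]
  · rw [min_eq_right ((one_le_div hδ).2 ht.le)]
    simpa using hδ.le

section FunctionalCalculus

variable {A B : Type*} [NonUnitalCStarAlgebra A] [NonUnitalCStarAlgebra B]

lemma norm_sub_mul_cfcₙ_sq_le (c : A) {f : ℝ → ℝ} (hf : Continuous f) (hf0 : f 0 = 0) {M : ℝ}
    (hM : ∀ t, |t * (1 - f t) ^ 2| ≤ M) : ‖c - c * cfcₙ f (star c * c)‖ ^ 2 ≤ M := by
  have hm : IsSelfAdjoint (cfcₙ f (star c * c)) := cfcₙ_predicate f _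
  have hcfc : cfcₙ (fun t ↦ t * (1 - f t) ^ 2) (star c * c) =
      star (c - c * cfcₙ f (star c * c)) * (c - c * cfcₙ f (star c * c)) := by
    have e : (fun t : ℝ ↦ t * (1 - f t) ^ 2) = fun t ↦ (t - t * f t) - f t * (t - t * f t) := by
      funext t; ring
    rw [e, cfcₙ_sub _ _ _ (by fun_prop) (by simp [hf0]) (by fun_prop) (by simp [hf0]),
      cfcₙ_mul _ _ _ hf.continuousOn hf0 (by fun_prop) (by simp [hf0]),
      cfcₙ_sub _ _ _ (by fun_prop) (by simp) (by fun_prop) (by simp [hf0]),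
      cfcₙ_mul _ _ _ (by fun_prop) (by simp) hf.continuousOn hf0, cfcₙ_id' ℝ (star c * c),
      star_sub, star_mul, hm.star_eq]
    noncomm_ring
  rw [sq, ← CStarRing.norm_star_mul_self, ← hcfc]
  exact norm_cfcₙ_le fun t _ ↦ hM t

lemma exists_map_eq_zero_norm_sub_le (φ : A →⋆ₙₐ[ℂ] B) (v : A) :
    ∃ d, φ d = 0 ∧ ‖v - d‖ ≤ ‖φ v‖ := by
  rcases (norm_nonneg (φ v)).eq_or_lt with h | h
  · exact ⟨v, norm_eq_zero.1 h.symm, by simp⟩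
  set r := ‖φ v‖ ^ 2
  have hr : 0 < r := by positivity
  let f : ℝ → ℝ := fun t ↦ 1 - r / max |t| r
  have hf : Continuous f :=
    continuous_const.sub (continuous_const.div (continuous_abs.max continuous_const)
      fun t ↦ (lt_max_of_lt_right hr).ne')
  have hf0 : f 0 = 0 := by simp [f, hr.le, hr.ne']
  refine ⟨v * cfcₙ f (star v * v), ?_, ?_⟩
  · -- `f` vanishes on `[-r, r]`, which contains the spectrum of `star (φ v) * φ v`.
    have hvanish : cfcₙ f (star (φ v) * φ v) = 0 := by
      rw [← cfcₙ_zero ℝ (star (φ v) * φ v)]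
      refine cfcₙ_congr fun t ht ↦ ?_
      have ht : ‖t‖ ≤ r := (NonUnitalIsometricContinuousFunctionalCalculus.norm_quasispectrum_le
        _ ht).trans_eq (by rw [CStarRing.norm_star_mul_self, ← sq])
      simp [f, max_eq_right (Real.norm_eq_abs t ▸ ht), hr.ne']
    have hsa := IsSelfAdjoint.star_mul_self v
    rw [map_mul, φ.map_cfcₙ f _ hf.continuousOn hf0 (ha := hsa) (hφa := hsa.map φ), map_mul,
      map_star, hvanish, mul_zero]
  · have := norm_sub_mul_cfcₙ_sq_le v hf hf0 fun t ↦ by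
      simpa [f] using abs_mul_div_max_sq_le hr t
    exact (pow_le_pow_iff_left₀ (norm_nonneg _) (norm_nonneg _) two_ne_zero).1 this

lemma exists_map_eq_zero_norm_sub_mul_le (φ : A →⋆ₙₐ[ℂ] B) {y : A} (hy : φ y = 0) {ε : ℝ}
    (hε : 0 < ε) : ∃ u, φ u = 0 ∧ ‖u‖ ≤ 1 ∧ ‖y - y * u‖ ≤ ε := by
  let g : ℝ → ℝ := fun t ↦ min (|t| / ε ^ 2) 1
  have hg : Continuous g := by fun_prop
  have hg0 : g 0 = 0 := by simp [g]
  refine ⟨cfcₙ g (star y * y), ?_, ?_, ?_⟩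
  · rw [φ.map_cfcₙ g _ hg.continuousOn hg0, map_mul, map_star, hy, mul_zero, cfcₙ_apply_zero]
  · refine norm_cfcₙ_le fun t _ ↦ ?_
    rw [Real.norm_eq_abs, abs_of_nonneg (by positivity)]
    exact min_le_right _ _
  · have := norm_sub_mul_cfcₙ_sq_le y hg hg0 (abs_mul_one_sub_min_sq_le (pow_pos hε 2))
    exact (pow_le_pow_iff_left₀ (norm_nonneg _) hε.le two_ne_zero).1 this

end FunctionalCalculus

lemma pi_norm_eq_sq_of_forall {ι : Type*} [Fintype ι] {F G : ι → Type*}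
    [∀ i, SeminormedAddCommGroup (F i)] [∀ i, SeminormedAddCommGroup (G i)] {f : ∀ i, F i}
    {g : ∀ i, G i} (h : ∀ i, ‖f i‖ = ‖g i‖ ^ 2) : ‖f‖ = ‖g‖ ^ 2 := by
  refine le_antisymm ((pi_norm_le_iff_of_nonneg (by positivity)).2 fun i ↦ ?_) ?_
  · rw [h i]
    gcongr
    exact norm_le_pi_norm g i
  · refine (Real.le_sqrt (norm_nonneg g) (norm_nonneg f)).1 ?_
    refine (pi_norm_le_iff_of_nonneg (Real.sqrt_nonneg _)).2 fun i ↦ ?_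
    rw [← Real.sqrt_sq (norm_nonneg (g i)), ← h i]
    exact Real.sqrt_le_sqrt (norm_le_pi_norm f i)

section ChineseRemainder

variable {A : Type*} [NonUnitalCStarAlgebra A] {ι : Type*} {B : ι → Type*}
  [∀ i, NonUnitalCStarAlgebra (B i)]

def NonUnitalStarAlgHom.pi (q : ∀ i, A →⋆ₙₐ[ℂ] B i) : A →⋆ₙₐ[ℂ] ∀ i, B i where
  toFun a i := q i a
  map_smul' c a := by funext i; simp
  map_zero' := by funext i; simp
  map_add' a b := by funext i; simp
  map_mul' a b := by funext i; simp
  map_star' a := by funext i; exact map_star (q i) a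

@[simp]
lemma NonUnitalStarAlgHom.pi_apply (q : ∀ i, A →⋆ₙₐ[ℂ] B i) (a : A) (i : ι) :
    NonUnitalStarAlgHom.pi q a i = q i a :=
  rfl

lemma exists_map_eq_zero_norm_map_sub_le_of_sub_mem_sup {C D : Type*} [NonUnitalCStarAlgebra C]
    [NonUnitalCStarAlgebra D] {J K : TwoSidedIdeal A} (φ : A →⋆ₙₐ[ℂ] C) (ψ : A →⋆ₙₐ[ℂ] D)
    (hJ : ∀ a ∈ J, φ a = 0) (hK : ∀ a ∈ K, ψ a = 0) {v w : A} (h : w - v ∈ J ⊔ K) :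
    ∃ y, φ y = 0 ∧ ‖ψ (w - y)‖ ≤ ‖φ v‖ := by
  obtain ⟨d, hd, hvd⟩ := exists_map_eq_zero_norm_sub_le φ v
  obtain ⟨x, hx, k, hk, hxk⟩ := TwoSidedIdeal.mem_sup.1 h
  refine ⟨d + x, by rw [map_add, hd, hJ x hx, add_zero], ?_⟩
  have e : w - (d + x) = (v - d) + k := by rw [← sub_eq_iff_eq_add'.2 hxk.symm]; abel
  rw [e, map_add, hK k hk, add_zero]
  exact (NonUnitalStarAlgHom.norm_apply_le ψ _).trans hvd

/-- An approximate form of `(J₁ ⊔ K) ⊓ ⋯ ⊓ (Jₛ ⊔ K) ≤ (J₁ ⊓ ⋯ ⊓ Jₛ) ⊔ K`, measured in `A ⧸ K`. -/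
lemma exists_forall_map_eq_zero_norm_map_sub_le {C : Type*} [NonUnitalCStarAlgebra C]
    (φ : ∀ i, A →⋆ₙₐ[ℂ] B i) (ψ : A →⋆ₙₐ[ℂ] C) (v : A) {ε : ℝ} (hε : 0 < ε) (s : Finset ι)
    (h : ∀ i ∈ s, ∃ y, φ i y = 0 ∧ ‖ψ (v - y)‖ ≤ ε) :
    ∃ d, (∀ i ∈ s, φ i d = 0) ∧ ‖ψ (v - d)‖ ≤ 3 * s.card * ε := by
  classical
  induction s using Finset.induction_on with
  | empty => exact ⟨v, by simp, by simp⟩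
  | @insert t s ht ih =>
    obtain ⟨d, hd, hdv⟩ := ih fun i hi ↦ h i (Finset.mem_insert_of_mem hi)
    obtain ⟨y, hy, hyv⟩ := h t (Finset.mem_insert_self t s)
    obtain ⟨u, hu, hu₁, hyu⟩ := exists_map_eq_zero_norm_sub_mul_le (φ t) hy hε
    have hψu : ‖ψ u‖ ≤ 1 := (NonUnitalStarAlgHom.norm_apply_le ψ u).trans hu₁
    have hψyu : ‖ψ (y - y * u)‖ ≤ ε := (NonUnitalStarAlgHom.norm_apply_le ψ _).trans hyu
    refine ⟨d * u, (Finset.forall_mem_insert _ _ _).2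
      ⟨by rw [map_mul, hu, mul_zero], fun i hi ↦ ?_⟩, ?_⟩
    · rw [map_mul, hd i hi, zero_mul]
    -- multiplying by the local unit `u` of `y` kills `t` and moves `v` by at most `3 ε`
    have e : v - d * u = (v - y) - (v - y) * u + (y - y * u) + (v - d) * u := by noncomm_ring
    rw [e, map_add, map_add, map_sub, map_mul, map_mul, Finset.card_insert_of_notMem ht]
    calc ‖ψ (v - y) - ψ (v - y) * ψ u + ψ (y - y * u) + ψ (v - d) * ψ u‖
        ≤ ‖ψ (v - y)‖ + ‖ψ (v - y)‖ * ‖ψ u‖ + ‖ψ (y - y * u)‖ + ‖ψ (v - d)‖ * ‖ψ u‖ := by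
          grw [norm_add_le, norm_add_le, norm_sub_le, norm_mul_le, norm_mul_le]
      _ ≤ ε + ε * 1 + ε + 3 * s.card * ε * 1 := by gcongr
      _ = 3 * ↑(s.card + 1) * ε := by push_cast; ring

/-- Approximate Chinese remainder theorem for closed ideals of a C⋆-algebra. -/
lemma exists_forall_norm_map_sub_le [Fintype ι] (J : ι → TwoSidedIdeal A)
    (q : ∀ i, A →⋆ₙₐ[ℂ] B i) (hJ : ∀ i, ∀ a ∈ J i, q i a = 0) (a : ι → A)
    (ha : ∀ i j, a i - a j ∈ J i ⊔ J j) {ε : ℝ} (hε : 0 < ε) :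
    ∃ c, ∀ i, ‖q i (c - a i)‖ ≤ ε := by
  classical
  suffices ∀ s : Finset ι, ∀ ε > 0, ∃ c, ∀ i ∈ s, ‖q i (c - a i)‖ ≤ ε by
    simpa using this Finset.univ ε hε
  intro s
  induction s using Finset.induction_on with
  | empty => exact fun _ _ ↦ ⟨0, by simp⟩
  | @insert m s hm ih =>
    intro ε hε
    have hN : (0 : ℝ) < 3 * Fintype.card ι + 1 := by positivity
    obtain ⟨c, hc⟩ := ih (ε / (3 * Fintype.card ι + 1)) (by positivity)
    have hy (i : ι) (hi : i ∈ s) : ∃ y, q i y = 0 ∧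
        ‖q m (c - a m - y)‖ ≤ ε / (3 * Fintype.card ι + 1) := by
      obtain ⟨y, hy, hyb⟩ := exists_map_eq_zero_norm_map_sub_le_of_sub_mem_sup (q i) (q m) (hJ i)
        (hJ m) (v := c - a i) (w := c - a m) (by simpa using ha i m)
      exact ⟨y, hy, hyb.trans (hc i hi)⟩
    obtain ⟨d, hd, hdm⟩ := exists_forall_map_eq_zero_norm_map_sub_le q (q m) (c - a m)
      (by positivity) s hy
    refine ⟨c - d, (Finset.forall_mem_insert _ _ _).2 ⟨?_, fun i hi ↦ ?_⟩⟩
    · rw [sub_right_comm]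
      refine hdm.trans ?_
      have hs : (s.card : ℝ) ≤ Fintype.card ι := by exact_mod_cast s.card_le_univ
      rw [← mul_div_assoc, div_le_iff₀ hN]
      nlinarith
    · rw [sub_right_comm, map_sub, hd i hi, sub_zero]
      exact (hc i hi).trans (div_le_self hε.le (by linarith))

lemma exists_forall_map_eq [Fintype ι] (J : ι → TwoSidedIdeal A) (q : ∀ i, A →⋆ₙₐ[ℂ] B i)
    (hJ : ∀ i, ∀ a ∈ J i, q i a = 0) (hq : ∀ x y, (∀ i, q i x = q i y) → x = y) (a : ι → A)
    (ha : ∀ i j, a i - a j ∈ J i ⊔ J j) : ∃ c, ∀ i, q i c = q i (a i) := by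
  have hclosed : IsClosed (Set.range (NonUnitalStarAlgHom.pi q)) :=
    (NonUnitalStarAlgHom.isometry _ fun x y h ↦ hq x y fun i ↦ congrFun h i)
      |>.isClosedEmbedding.isClosed_range
  have hmem : (fun i ↦ q i (a i)) ∈ closure (Set.range (NonUnitalStarAlgHom.pi q)) := by
    refine Metric.mem_closure_iff.2 fun ε hε ↦ ?_
    obtain ⟨c, hc⟩ := exists_forall_norm_map_sub_le J q hJ a ha (half_pos hε)
    refine ⟨_, Set.mem_range_self c, ?_⟩
    rw [dist_comm, dist_eq_norm]
    refine ((pi_norm_le_iff_of_nonneg (half_pos hε).le).2 fun i ↦ ?_).trans_lt (half_lt_self hε)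
    simpa using hc i
  obtain ⟨c, hc⟩ := hclosed.closure_eq ▸ hmem
  exact ⟨c, fun i ↦ congrFun hc i⟩

lemma exists_eq_star_mul_self_of_forall_map_nonneg [∀ i, PartialOrder (B i)]
    [∀ i, StarOrderedRing (B i)] (q : ∀ i, A →⋆ₙₐ[ℂ] B i)
    (hq : ∀ x y, (∀ i, q i x = q i y) → x = y) {a : A} (ha : ∀ i, 0 ≤ q i a) :
    ∃ b, a = star b * b := by
  have hsa : IsSelfAdjoint a := hq _ _ fun i ↦ by rw [map_star]; exact (ha i).isSelfAdjoint.star_eq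
  refine ⟨cfcₙ Real.sqrt a, hq _ _ fun i ↦ ?_⟩
  rw [map_mul, map_star, (q i).map_cfcₙ Real.sqrt a (ha := hsa) (hφa := hsa.map (q i)),
    ← CFC.sqrt_eq_real_sqrt _ (ha i), (CFC.sqrt_nonneg _).isSelfAdjoint.star_eq,
    CFC.sqrt_mul_sqrt_self _ (ha i)]

end ChineseRemainder

section InnerSelf

variable {A : Type*} [NonUnitalCStarAlgebra A] {ι : Type*} {B : ι → Type*}
  [∀ i, NonUnitalCStarAlgebra (B i)] [∀ i, PartialOrder (B i)] {E : ι → Type*}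
  [∀ i, NormedAddCommGroup (E i)] [∀ i, Module ℂ (E i)] [∀ i, SMul (B i)ᵐᵒᵖ (E i)]
  [∀ i, RightCStarModule (B i) (E i)] {q : ∀ i, A →⋆ₙₐ[ℂ] B i} {a : A} {z : ∀ i, E i}

lemma eq_zero_iff_of_forall_map_eq_inner_self (hq : ∀ x y, (∀ i, q i x = q i y) → x = y)
    (ha : ∀ i, q i a = inner (B i) (z i) (z i)) : a = 0 ↔ z = 0 := by
  refine ⟨fun h ↦ funext fun i ↦ RightCStarModule.inner_self (A := B i) |>.1 ?_,
    fun h ↦ hq _ _ fun i ↦ ?_⟩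
  · rw [← ha i, h, map_zero]
  · rw [ha i, h, map_zero, Pi.zero_apply, RightCStarModule.inner_self.2 rfl]

lemma norm_eq_sq_of_forall_map_eq_inner_self [Fintype ι]
    (hq : ∀ x y, (∀ i, q i x = q i y) → x = y) (ha : ∀ i, q i a = inner (B i) (z i) (z i)) :
    ‖a‖ = ‖z‖ ^ 2 := by
  rw [← NonUnitalStarAlgHom.norm_map (NonUnitalStarAlgHom.pi q)
    (fun x y h ↦ hq x y fun i ↦ congrFun h i)]
  exact pi_norm_eq_sq_of_forall fun i ↦ by
    rw [NonUnitalStarAlgHom.pi_apply, ha i, RightCStarModule.norm_sq_eq_norm_inner_self (A := B i)]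

end InnerSelf

section resIdealSpan

variable {A B E : Type*} [NonUnitalCStarAlgebra A] [NonUnitalCStarAlgebra B]
  [NormedAddCommGroup E] [Module ℂ E] [SMul Bᵐᵒᵖ E] (q : A →⋆ₙₐ[ℂ] B) (S : Set A)

lemma zero_mem_resIdealSpan : (0 : E) ∈ resIdealSpan E q S :=
  subset_closure (Submodule.zero_mem _)

lemma neg_mem_resIdealSpan {x : E} (hx : x ∈ resIdealSpan E q S) : -x ∈ resIdealSpan E q S :=
  (Submodule.span ℂ _).toAddSubgroup.topologicalClosure.neg_mem hx

lemma isClosed_resIdealSpan : IsClosed (resIdealSpan E q S) :=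
  isClosed_closure

end resIdealSpan

namespace IsGluingDatum

variable {A : Type*} [NonUnitalCStarAlgebra A] {n : ℕ} {J : Fin n → TwoSidedIdeal A}
  {B : Fin n → Type*} [∀ i, NonUnitalCStarAlgebra (B i)] [∀ i, PartialOrder (B i)]
  [∀ i, StarOrderedRing (B i)] {q : ∀ i, A →⋆ₙₐ[ℂ] B i} {E : Fin n → Type*}
  [∀ i, NormedAddCommGroup (E i)] [∀ i, Module ℂ (E i)] [∀ i, SMul (B i)ᵐᵒᵖ (E i)]
  [∀ i, RightCStarModule (B i) (E i)] {ζ : ∀ i j, E j → E i → Prop}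

lemma zero (hζ : IsGluingDatum J q ζ) (i j : Fin n) : ζ i j 0 0 := by
  obtain ⟨w, hw⟩ := hζ.total i j 0
  have hw' := hζ.func i j 0 (w + w) w (by simpa using hζ.add i j 0 0 w w hw hw) hw
  rw [add_sub_cancel_right] at hw'
  exact hζ.resp i j 0 0 w 0 hw (by rw [sub_self]; exact zero_mem_resIdealSpan _ _)
    (by simpa using neg_mem_resIdealSpan _ _ hw')

lemma neg (hζ : IsGluingDatum J q ζ) {i j : Fin n} {z : E j} {w : E i} (h : ζ i j z w) :
    ζ i j (-z) (-w) := by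
  obtain ⟨w₀, h₀⟩ := hζ.total i j (-z)
  have hsum := hζ.func i j 0 (w + w₀) 0 (by simpa using hζ.add i j _ _ _ _ h h₀) (hζ.zero i j)
  rw [sub_zero] at hsum
  refine hζ.resp i j (-z) (-z) w₀ (-w) h₀ (by rw [sub_self]; exact zero_mem_resIdealSpan _ _) ?_
  simpa [sub_eq_add_neg, add_comm] using neg_mem_resIdealSpan _ _ hsum

lemma sub (hζ : IsGluingDatum J q ζ) {i j : Fin n} {z z' : E j} {w w' : E i} (h : ζ i j z w)
    (h' : ζ i j z' w') : ζ i j (z - z') (w - w') := by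
  simpa [sub_eq_add_neg] using hζ.add i j _ _ _ _ h (hζ.neg h')

lemma isClosed_graph (hζ : IsGluingDatum J q ζ) (i j : Fin n) :
    IsClosed {p : E j × E i | ζ i j p.1 p.2} := by
  refine closure_subset_iff_isClosed.1 fun ⟨z, w⟩ hzw ↦ ?_
  obtain ⟨w₁, h₁⟩ := hζ.total i j z
  set S := resIdealSpan (E i) (q i) ((J i ⊔ J j : TwoSidedIdeal A) : Set A)
  -- `ζ i j` is isometric, so graph points `(z', w')` near `(z, w)` put `w - w₁` near `S`.
  have hbound : {p : E j × E i | ζ i j p.1 p.2} ⊆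
      {p | infDist (w - w₁) S ≤ ‖p.1 - z‖ + ‖w - p.2‖} := fun ⟨z', w'⟩ h' ↦ by
    calc infDist (w - w₁) S ≤ infDist (w' - w₁) S + dist (w - w₁) (w' - w₁) :=
          infDist_le_infDist_add_dist
      _ = infDist (z' - z) _ + ‖w - w'‖ := by
          rw [hζ.isometry i j _ _ (hζ.sub h' h₁), dist_sub_right, dist_eq_norm]
      _ ≤ ‖z' - z‖ + ‖w - w'‖ := by
          gcongr
          simpa using infDist_le_dist_of_mem (x := z' - z) (zero_mem_resIdealSpan (q j) _)
  have hclosed : IsClosed {p : E j × E i | infDist (w - w₁) S ≤ ‖p.1 - z‖ + ‖w - p.2‖} :=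
    isClosed_le continuous_const (by fun_prop)
  have hdist : infDist (w - w₁) S ≤ 0 := by simpa using closure_minimal hbound hclosed hzw
  have hmem : w - w₁ ∈ S := ((isClosed_resIdealSpan (q i) _).mem_iff_infDist_zero
    ⟨0, zero_mem_resIdealSpan (q i) _⟩).2 (le_antisymm hdist infDist_nonneg)
  exact hζ.resp i j z z w₁ w h₁ (by rw [sub_self]; exact zero_mem_resIdealSpan _ _) hmem

lemma isClosed_setOf_forall (hζ : IsGluingDatum J q ζ) :
    IsClosed {z : ∀ i, E i | ∀ i j, ζ i j (z j) (z i)} := by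
  have h : {z : ∀ i, E i | ∀ i j, ζ i j (z j) (z i)} =
      ⋂ i, ⋂ j, (fun z : ∀ i, E i ↦ (z j, z i)) ⁻¹' {p | ζ i j p.1 p.2} := by
    ext; simp
  rw [h]
  exact isClosed_iInter fun i ↦ isClosed_iInter fun j ↦
    (hζ.isClosed_graph i j).preimage (by fun_prop)

/-- `c • z` is the limit of `z <• q j (c • u)` along an approximate unit `u` of `A`, and the graph
of `ζ i j` is closed. -/
lemma smul (hζ : IsGluingDatum J q ζ) (hq : ∀ i, Function.Surjective (q i)) {i j : Fin n}
    {z : E j} {w : E i} (h : ζ i j z w) (c : ℂ) : ζ i j (c • z) (c • w) := by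
  let _ := CStarAlgebra.spectralOrder A
  let _ := CStarAlgebra.spectralOrderedRing A
  have hl := CStarAlgebra.increasingApproximateUnit A
  have hlim (k : Fin n) (e : E k) :
      Tendsto (fun u ↦ e <• q k (c • u)) (CStarAlgebra.approximateUnit A) (𝓝 (c • e)) := by
    simp_rw [map_smul, ← RightCStarModule.smul_op_smul_comm]
    exact ((RightCStarModule.continuous_const_smul (B k) c).tendsto e).comp
      (RightCStarModule.tendsto_op_smul_map (q k) (hq k) hl.toIsApproximateUnit
        hl.eventually_isSelfAdjoint hl.eventually_norm e)
  exact (hζ.isClosed_graph i j).mem_of_tendsto ((hlim j z).prodMk_nhds (hlim i w))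
    (.of_forall fun u ↦ hζ.smulA i j (c • u) z w h)

lemma exists_forall_map_eq_inner (hζ : IsGluingDatum J q ζ)
    (hq_surj : ∀ i, Function.Surjective (q i)) (hJ : ∀ i, ∀ a ∈ J i, q i a = 0)
    (hq : ∀ x y, (∀ i, q i x = q i y) → x = y) {z z' : ∀ i, E i}
    (hz : ∀ i j, ζ i j (z j) (z i)) (hz' : ∀ i j, ζ i j (z' j) (z' i)) :
    ∃ a : A, ∀ i, q i a = inner (B i) (z i) (z' i) := by
  choose a ha using fun i ↦ hq_surj i (inner (B i) (z i) (z' i))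
  obtain ⟨c, hc⟩ := exists_forall_map_eq J q hJ hq a fun i j ↦
    hζ.unitary i j _ _ _ _ (hz i j) (hz' i j) _ _ (ha i) (ha j)
  exact ⟨c, fun i ↦ (hc i).trans (ha i)⟩

end IsGluingDatum

theorem statement5_general
    {A : Type*} [NonUnitalCStarAlgebra A]
    (n : ℕ)
    (J : Fin n → TwoSidedIdeal A)
    (hJinter : ∀ a : A, (∀ i, a ∈ J i) → a = 0)
    -- the quotient C*-algebras `B i = A / J i`:
    {B : Fin n → Type*} [∀ i, NonUnitalCStarAlgebra (B i)]
    [∀ i, PartialOrder (B i)] [∀ i, StarOrderedRing (B i)]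
    (q : ∀ i, A →⋆ₙₐ[ℂ] B i)
    (hq_surj : ∀ i, Function.Surjective (q i))
    (hq_ker : ∀ i (a : A), q i a = 0 ↔ a ∈ J i)
    -- the Hilbert modules `E i` over `B i`:
    {E : Fin n → Type*} [∀ i, NormedAddCommGroup (E i)] [∀ i, Module ℂ (E i)]
    [∀ i, SMul (B i)ᵐᵒᵖ (E i)] [∀ i, RightCStarModule (B i) (E i)]
    -- the gluing maps:
    (ζ : ∀ i j, E j → E i → Prop)
    (hζ : IsGluingDatum J q ζ) :
    -- (a) the glued set `G` is a closed `A`-submodule of `Π i, E i`: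
    ((0 : ∀ i, E i) ∈ {z : ∀ i, E i | ∀ i j, ζ i j (z j) (z i)} ∧
      (∀ z w : ∀ i, E i, (∀ i j, ζ i j (z j) (z i)) → (∀ i j, ζ i j (w j) (w i)) →
        (∀ i j, ζ i j ((z + w) j) ((z + w) i))) ∧
      (∀ z : ∀ i, E i, (∀ i j, ζ i j (z j) (z i)) → (∀ i j, ζ i j ((-z) j) ((-z) i))) ∧
      (∀ z : ∀ i, E i, (∀ i j, ζ i j (z j) (z i)) → ∀ c : ℂ,
        (∀ i j, ζ i j ((c • z) j) ((c • z) i))) ∧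
      (∀ z : ∀ i, E i, (∀ i j, ζ i j (z j) (z i)) → ∀ a : A,
        (∀ i j, ζ i j ((z j) <• q j a) ((z i) <• q i a))) ∧
      IsClosed {z : ∀ i, E i | ∀ i j, ζ i j (z j) (z i)}) ∧
    -- (b) existence and uniqueness of the `A`-valued inner product:
    (∀ z z' : ∀ i, E i, (∀ i j, ζ i j (z j) (z i)) → (∀ i j, ζ i j (z' j) (z' i)) →
      ∃! a : A, ∀ i, q i a = (inner (B i) (z i) (z' i) : B i)) ∧
    -- (c) with this inner product `G` is a Hilbert `A`-module with the sup norm: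
    (∃ P : (∀ i, E i) → (∀ i, E i) → A,
      (∀ z z' : ∀ i, E i, (∀ i j, ζ i j (z j) (z i)) → (∀ i j, ζ i j (z' j) (z' i)) →
        ∀ i, q i (P z z') = (inner (B i) (z i) (z' i) : B i)) ∧
      (∀ z z' : ∀ i, E i, (∀ i j, ζ i j (z j) (z i)) → (∀ i j, ζ i j (z' j) (z' i)) →
        star (P z z') = P z' z) ∧
      (∀ z z' w : ∀ i, E i, (∀ i j, ζ i j (z j) (z i)) → (∀ i j, ζ i j (z' j) (z' i)) →
        (∀ i j, ζ i j (w j) (w i)) → P w (z + z') = P w z + P w z') ∧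
      (∀ z z' : ∀ i, E i, (∀ i j, ζ i j (z j) (z i)) → (∀ i j, ζ i j (z' j) (z' i)) →
        ∀ a : A, P z (fun i => (z' i) <• q i a) = P z z' * a) ∧
      (∀ z z' : ∀ i, E i, (∀ i j, ζ i j (z j) (z i)) → (∀ i j, ζ i j (z' j) (z' i)) →
        ∀ c : ℂ, P z (c • z') = c • P z z') ∧
      (∀ z : ∀ i, E i, (∀ i j, ζ i j (z j) (z i)) → ∃ b : A, P z z = star b * b) ∧
      (∀ z : ∀ i, E i, (∀ i j, ζ i j (z j) (z i)) → (P z z = 0 ↔ z = 0)) ∧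
      (∀ z : ∀ i, E i, (∀ i j, ζ i j (z j) (z i)) → ‖P z z‖ = ‖z‖ ^ 2)) := by
  have hJ : ∀ i, ∀ a ∈ J i, q i a = 0 := fun i a ↦ (hq_ker i a).2
  have hq : ∀ x y : A, (∀ i, q i x = q i y) → x = y := fun x y h ↦
    sub_eq_zero.1 (hJinter _ fun i ↦ (hq_ker i _).1 (by rw [map_sub, h i, sub_self]))
  have hadd (z w : ∀ i, E i) (hz : ∀ i j, ζ i j (z j) (z i)) (hw : ∀ i j, ζ i j (w j) (w i))
      (i j : Fin n) : ζ i j ((z + w) j) ((z + w) i) := hζ.add i j _ _ _ _ (hz i j) (hw i j)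
  have hsmul (z : ∀ i, E i) (hz : ∀ i j, ζ i j (z j) (z i)) (c : ℂ) (i j : Fin n) :
      ζ i j ((c • z) j) ((c • z) i) := hζ.smul hq_surj (hz i j) c
  choose! P hP using fun z z' ↦ hζ.exists_forall_map_eq_inner hq_surj hJ hq (z := z) (z' := z')
  refine ⟨⟨hζ.zero, hadd, fun z hz i j ↦ hζ.neg (hz i j), hsmul,
      fun z hz a i j ↦ hζ.smulA i j a _ _ (hz i j), hζ.isClosed_setOf_forall⟩,
    fun z z' hz hz' ↦ ⟨P z z', hP z z' hz hz', fun a ha ↦ hq _ _ fun i ↦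
      (ha i).trans (hP z z' hz hz' i).symm⟩,
    P, hP, fun z z' hz hz' ↦ hq _ _ fun i ↦ ?_, fun z z' w hz hz' hw ↦ hq _ _ fun i ↦ ?_,
    fun z z' hz hz' a ↦ hq _ _ fun i ↦ ?_, fun z z' hz hz' c ↦ hq _ _ fun i ↦ ?_,
    fun z hz ↦ exists_eq_star_mul_self_of_forall_map_nonneg q hq fun i ↦
      hP z z hz hz i ▸ RightCStarModule.inner_self_nonneg,
    fun z hz ↦ eq_zero_iff_of_forall_map_eq_inner_self hq (hP z z hz hz),
    fun z hz ↦ norm_eq_sq_of_forall_map_eq_inner_self hq (hP z z hz hz)⟩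
  · rw [map_star, hP z z' hz hz', hP z' z hz' hz, RightCStarModule.star_inner]
  · rw [map_add, hP w _ hw (hadd z z' hz hz'), hP w z hw hz, hP w z' hw hz']
    exact RightCStarModule.inner_add_right
  · rw [map_mul, hP z _ hz fun i j ↦ hζ.smulA i j a _ _ (hz' i j), hP z z' hz hz']
    exact RightCStarModule.inner_op_smul_right
  · rw [map_smul, hP z _ hz (hsmul z' hz' c), hP z z' hz hz']
    exact RightCStarModule.inner_smul_right_complex

theorem statement5
    {A : Type*} [NonUnitalCStarAlgebra A]
    (n : ℕ) (hn : 1 ≤ n)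
    (J : Fin n → TwoSidedIdeal A)
    (hJclosed : ∀ i, IsClosed ((J i : Set A)))
    (hJinter : ∀ a : A, (∀ i, a ∈ J i) → a = 0)
    -- the quotient C*-algebras `B i = A / J i`:
    {B : Fin n → Type*} [∀ i, NonUnitalCStarAlgebra (B i)]
    [∀ i, PartialOrder (B i)] [∀ i, StarOrderedRing (B i)]
    (q : ∀ i, A →⋆ₙₐ[ℂ] B i)
    (hq_surj : ∀ i, Function.Surjective (q i))
    (hq_ker : ∀ i (a : A), q i a = 0 ↔ a ∈ J i)
    -- the Hilbert modules `E i` over `B i`: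
    {E : Fin n → Type*} [∀ i, NormedAddCommGroup (E i)] [∀ i, Module ℂ (E i)]
    [∀ i, SMul (B i)ᵐᵒᵖ (E i)] [∀ i, RightCStarModule (B i) (E i)] [∀ i, CompleteSpace (E i)]
    -- the gluing maps:
    (ζ : ∀ i j, E j → E i → Prop)
    (hζ : IsGluingDatum J q ζ) :
    -- (a) the glued set `G` is a closed `A`-submodule of `Π i, E i`:
    ((0 : ∀ i, E i) ∈ {z : ∀ i, E i | ∀ i j, ζ i j (z j) (z i)} ∧
      (∀ z w : ∀ i, E i, (∀ i j, ζ i j (z j) (z i)) → (∀ i j, ζ i j (w j) (w i)) →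
        (∀ i j, ζ i j ((z + w) j) ((z + w) i))) ∧
      (∀ z : ∀ i, E i, (∀ i j, ζ i j (z j) (z i)) → (∀ i j, ζ i j ((-z) j) ((-z) i))) ∧
      (∀ z : ∀ i, E i, (∀ i j, ζ i j (z j) (z i)) → ∀ c : ℂ,
        (∀ i j, ζ i j ((c • z) j) ((c • z) i))) ∧
      (∀ z : ∀ i, E i, (∀ i j, ζ i j (z j) (z i)) → ∀ a : A,
        (∀ i j, ζ i j ((z j) <• q j a) ((z i) <• q i a))) ∧
      IsClosed {z : ∀ i, E i | ∀ i j, ζ i j (z j) (z i)}) ∧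
    -- (b) existence and uniqueness of the `A`-valued inner product:
    (∀ z z' : ∀ i, E i, (∀ i j, ζ i j (z j) (z i)) → (∀ i j, ζ i j (z' j) (z' i)) →
      ∃! a : A, ∀ i, q i a = (inner (B i) (z i) (z' i) : B i)) ∧
    -- (c) with this inner product `G` is a Hilbert `A`-module with the sup norm:
    (∃ P : (∀ i, E i) → (∀ i, E i) → A,
      (∀ z z' : ∀ i, E i, (∀ i j, ζ i j (z j) (z i)) → (∀ i j, ζ i j (z' j) (z' i)) →
        ∀ i, q i (P z z') = (inner (B i) (z i) (z' i) : B i)) ∧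
      (∀ z z' : ∀ i, E i, (∀ i j, ζ i j (z j) (z i)) → (∀ i j, ζ i j (z' j) (z' i)) →
        star (P z z') = P z' z) ∧
      (∀ z z' w : ∀ i, E i, (∀ i j, ζ i j (z j) (z i)) → (∀ i j, ζ i j (z' j) (z' i)) →
        (∀ i j, ζ i j (w j) (w i)) → P w (z + z') = P w z + P w z') ∧
      (∀ z z' : ∀ i, E i, (∀ i j, ζ i j (z j) (z i)) → (∀ i j, ζ i j (z' j) (z' i)) →
        ∀ a : A, P z (fun i => (z' i) <• q i a) = P z z' * a) ∧
      (∀ z z' : ∀ i, E i, (∀ i j, ζ i j (z j) (z i)) → (∀ i j, ζ i j (z' j) (z' i)) →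
        ∀ c : ℂ, P z (c • z') = c • P z z') ∧
      (∀ z : ∀ i, E i, (∀ i j, ζ i j (z j) (z i)) → ∃ b : A, P z z = star b * b) ∧
      (∀ z : ∀ i, E i, (∀ i j, ζ i j (z j) (z i)) → (P z z = 0 ↔ z = 0)) ∧
      (∀ z : ∀ i, E i, (∀ i j, ζ i j (z j) (z i)) → ‖P z z‖ = ‖z‖ ^ 2)) :=
  statement5_general n J hJinter q hq_surj hq_ker ζ hζ
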